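/- Let f : E → ℝ be differentiable, L-smooth, and μ-strongly convex with 0 < μ ≤ L, and let x* ∈ E be a global minimizer of f. Let x : ℕ → E be the gradient descent sequence with constant step size λ = 1/L. Then for every k ≥ 0, ‖x_{k+1} - x*‖² ≤ (1 - μ/L)·‖x_k - x*‖². -/

import Mathlib

/-!
Strong convexity between `xₖ` and `x*` gives `⟪∇f xₖ, xₖ - x*⟫ ≥ f xₖ - f x* + μ/2 ‖xₖ - x*‖²`,
and the descent lemma for an `L`-Lipschitz gradient shows that the step `xₖ - ∇f xₖ / L`
decreases `f` by at least `‖∇f xₖ‖² / (2L)`, so `f xₖ - f x* ≥ ‖∇f xₖ‖² / (2L)`.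
Expanding `‖xₖ - x* - ∇f xₖ / L‖²` and inserting both bounds leaves `(1 - μ/L) ‖xₖ - x*‖²`.
-/

open RealInnerProductSpace

section

variable {E : Type*} [NormedAddCommGroup E] [InnerProductSpace ℝ E]

theorem norm_sub_smul_sq_le_of_le_inner {L μ : ℝ} (hL : 0 < L) {a g : E}
    (h : ‖g‖ ^ 2 / (2 * L) + μ / 2 * ‖a‖ ^ 2 ≤ ⟪g, a⟫) :
    ‖a - (1 / L) • g‖ ^ 2 ≤ (1 - μ / L) * ‖a‖ ^ 2 := by
  have hexpand : ‖a - (1 / L) • g‖ ^ 2 = ‖a‖ ^ 2 - 2 / L * ⟪g, a⟫ + ‖g‖ ^ 2 / L ^ 2 := by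
    rw [norm_sub_sq_real, inner_smul_right, norm_smul, real_inner_comm, mul_pow,
      Real.norm_eq_abs, sq_abs]
    ring
  have hscaled := mul_le_mul_of_nonneg_left h (by positivity : (0 : ℝ) ≤ 2 / L)
  have hrhs : 2 / L * (‖g‖ ^ 2 / (2 * L) + μ / 2 * ‖a‖ ^ 2)
      = ‖g‖ ^ 2 / L ^ 2 + μ / L * ‖a‖ ^ 2 := by
    field_simp
  rw [hexpand]
  linarith

variable {f' : E → E} {L : ℝ}

theorem inner_sub_le_of_lipschitz_gradient (hsmooth : ∀ x y, ‖f' x - f' y‖ ≤ L * ‖x - y‖)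
    (x v : E) {t : ℝ} (ht : 0 ≤ t) : ⟪f' (x + t • v) - f' x, v⟫ ≤ L * t * ‖v‖ ^ 2 :=
  calc ⟪f' (x + t • v) - f' x, v⟫ ≤ ‖f' (x + t • v) - f' x‖ * ‖v‖ := real_inner_le_norm _ _
    _ ≤ L * ‖x + t • v - x‖ * ‖v‖ := by gcongr; exact hsmooth _ _
    _ = L * t * ‖v‖ ^ 2 := by
      rw [add_sub_cancel_left, norm_smul, Real.norm_of_nonneg ht]
      ring

variable [CompleteSpace E] {f : E → ℝ}

theorem HasGradientAt.hasDerivAt_comp_add_smul {g x v : E} {t : ℝ}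
    (hf : HasGradientAt f g (x + t • v)) :
    HasDerivAt (fun s : ℝ => f (x + s • v)) ⟪g, v⟫ t := by
  have hline : HasDerivAt (fun s : ℝ => x + s • v) v t := by
    simpa using ((hasDerivAt_id t).smul_const v).const_add x
  have hcomp := hf.hasFDerivAt.comp_hasDerivAt t hline
  simp only [InnerProductSpace.toDual_apply_apply] at hcomp
  exact hcomp

theorem le_add_inner_add_sq_of_lipschitz_gradient
    (hdiff : ∀ x, HasGradientAt f (f' x) x)
    (hsmooth : ∀ x y, ‖f' x - f' y‖ ≤ L * ‖x - y‖) (x y : E) :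
    f y ≤ f x + ⟪f' x, y - x⟫ + L / 2 * ‖y - x‖ ^ 2 := by
  obtain ⟨v, rfl⟩ : ∃ v, y = x + v := ⟨y - x, by abel⟩
  rw [add_sub_cancel_left]
  have hline (t : ℝ) : HasDerivAt (fun s : ℝ => f (x + s • v)) ⟪f' (x + t • v), v⟫ t :=
    (hdiff _).hasDerivAt_comp_add_smul
  have hbound (t : ℝ) : HasDerivAt (fun s : ℝ => f x + s * ⟪f' x, v⟫ + L / 2 * s ^ 2 * ‖v‖ ^ 2)
      (⟪f' x, v⟫ + L * t * ‖v‖ ^ 2) t := by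
    have hquad := ((hasDerivAt_pow 2 t).const_mul (L / 2)).mul_const (‖v‖ ^ 2)
    exact (((hasDerivAt_mul_const _).const_add (f x)).add hquad).congr_deriv (by ring)
  have hcomparison := image_le_of_deriv_right_le_deriv_boundary (a := 0) (b := 1)
    (fun t _ => (hline t).continuousAt.continuousWithinAt)
    (fun t _ => (hline t).hasDerivWithinAt) (by simp)
    (fun t _ => (hbound t).continuousAt.continuousWithinAt)
    (fun t _ => (hbound t).hasDerivWithinAt)
    (fun t ht => by
      have := inner_sub_le_of_lipschitz_gradient hsmooth x v ht.1
      rw [inner_sub_left] at this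
      linarith)
    (Set.right_mem_Icc.2 zero_le_one)
  simpa using hcomparison

theorem apply_sub_smul_le_of_lipschitz_gradient
    (hdiff : ∀ x, HasGradientAt f (f' x) x)
    (hsmooth : ∀ x y, ‖f' x - f' y‖ ≤ L * ‖x - y‖) (x : E) (t : ℝ) :
    f (x - t • f' x) ≤ f x - t * (1 - L * t / 2) * ‖f' x‖ ^ 2 := by
  have h := le_add_inner_add_sq_of_lipschitz_gradient hdiff hsmooth x (x - t • f' x)
  rw [sub_sub_cancel_left, inner_neg_right, inner_smul_right, real_inner_self_eq_norm_sq,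
    norm_neg, norm_smul, mul_pow, Real.norm_eq_abs, sq_abs] at h
  linarith

end

theorem gd_strongly_convex_contraction {E : Type*} [NormedAddCommGroup E]
    [InnerProductSpace ℝ E] [CompleteSpace E]
    (f : E → ℝ) (f' : E → E) (L μ : ℝ) (hμ : 0 < μ) (hμL : μ ≤ L)
    (hdiff : ∀ x, HasGradientAt f (f' x) x)
    (hsmooth : ∀ x y, ‖f' x - f' y‖ ≤ L * ‖x - y‖)
    (hstrong : ∀ x y, f x + ⟪f' x, y - x⟫ + (μ / 2) * ‖y - x‖ ^ 2 ≤ f y)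
    (xstar : E) (hmin : ∀ y, f xstar ≤ f y)
    (x : ℕ → E)
    (hiter : ∀ k, x (k + 1) = x k - (1 / L) • f' (x k)) :
    ∀ k : ℕ, ‖x (k + 1) - xstar‖ ^ 2 ≤ (1 - μ / L) * ‖x k - xstar‖ ^ 2 := by
  intro k
  have hL : 0 < L := hμ.trans_le hμL
  have hstep := apply_sub_smul_le_of_lipschitz_gradient hdiff hsmooth (x k) (1 / L)
  have hgap : ‖f' (x k)‖ ^ 2 / (2 * L) ≤ f (x k) - f xstar := by
    have hcoef : 1 / L * (1 - L * (1 / L) / 2) * ‖f' (x k)‖ ^ 2 = ‖f' (x k)‖ ^ 2 / (2 * L) := by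
      field_simp
      ring
    linarith [hmin (x k - (1 / L) • f' (x k))]
  have hconvex := hstrong (x k) xstar
  rw [← neg_sub, inner_neg_right, norm_neg] at hconvex
  rw [hiter k, sub_right_comm]
  exact norm_sub_smul_sq_le_of_le_inner hL (by linarith)
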